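/- Let M, N be nests on a separable Hilbert space. If the Kadison–Kastler distance d(T(M), T(N)) < 1, then the Hausdorff distance between the nests satisfies d(M, N) < 1. -/

import Mathlib

open ContinuousLinearMap

/-- A nest on a Hilbert space: a chain of orthogonal projections containing `0` and `1`,
closed under arbitrary intersections (infima of ranges) and closed spans (closures of
suprema of ranges). -/
structure IsNest {H : Type*} [NormedAddCommGroup H] [InnerProductSpace ℂ H]
    [CompleteSpace H] (𝒩 : Set (H →L[ℂ] H)) : Prop where
  selfAdjoint : ∀ P ∈ 𝒩, IsSelfAdjoint P
  idem : ∀ P ∈ 𝒩, P ∘L P = P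
  chain : ∀ P ∈ 𝒩, ∀ Q ∈ 𝒩, Q ∘L P = P ∨ P ∘L Q = Q
  zero_mem : 0 ∈ 𝒩
  one_mem : 1 ∈ 𝒩
  inf_mem : ∀ S ⊆ 𝒩, ∃ P ∈ 𝒩, LinearMap.range (P : H →ₗ[ℂ] H) = ⨅ Q ∈ S, LinearMap.range (Q : H →ₗ[ℂ] H)
  sup_mem : ∀ S ⊆ 𝒩, ∃ P ∈ 𝒩,
    LinearMap.range (P : H →ₗ[ℂ] H) = (⨆ Q ∈ S, LinearMap.range (Q : H →ₗ[ℂ] H)).topologicalClosure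

/-- The nest algebra of a nest `𝒩`: all operators leaving every subspace of the nest
invariant, i.e. `(1 - P) A P = 0` for all `P ∈ 𝒩`. -/
def nestAlg {H : Type*} [NormedAddCommGroup H] [InnerProductSpace ℂ H]
    [CompleteSpace H] (𝒩 : Set (H →L[ℂ] H)) : Set (H →L[ℂ] H) :=
  {A | ∀ P ∈ 𝒩, (1 - P) ∘L A ∘L P = 0}

/-- The Kadison–Kastler distance between two sets of operators:
`max (sup_{A ∈ b₁(𝒜)} d(A, ℬ)) (sup_{B ∈ b₁(ℬ)} d(B, 𝒜))`. -/
noncomputable def kkDist {H : Type*} [NormedAddCommGroup H] [InnerProductSpace ℂ H]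
    [CompleteSpace H] (𝒜 ℬ : Set (H →L[ℂ] H)) : ℝ :=
  max (⨆ T : {T : H →L[ℂ] H // T ∈ 𝒜 ∧ ‖T‖ ≤ 1}, Metric.infDist T.1 ℬ)
      (⨆ T : {T : H →L[ℂ] H // T ∈ ℬ ∧ ‖T‖ ≤ 1}, Metric.infDist T.1 𝒜)


set_option linter.unusedSectionVars false

section Stmt16Helpers

variable {H : Type*} [NormedAddCommGroup H] [InnerProductSpace ℂ H] [CompleteSpace H]

local notation "⟪" x ", " y "⟫" => @inner ℂ _ _ x y

structure IsProj (Q : H →L[ℂ] H) : Prop where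
  symm : ∀ x y : H, ⟪Q x, y⟫ = ⟪x, Q y⟫
  idem : ∀ x, Q (Q x) = Q x

lemma isProj_of {Q : H →L[ℂ] H} (hsa : IsSelfAdjoint Q) (hid : Q ∘L Q = Q) : IsProj Q :=
  ⟨fun x y => hsa.isSymmetric x y, fun x => by
    have := ContinuousLinearMap.ext_iff.mp hid x
    simpa using this⟩

lemma IsProj.one_sub {Q : H →L[ℂ] H} (hQ : IsProj Q) : IsProj (1 - Q) := by
  constructor
  · intro x y
    simp only [ContinuousLinearMap.sub_apply, ContinuousLinearMap.one_apply, inner_sub_left,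
      inner_sub_right, hQ.symm x y]
  · intro x
    simp only [ContinuousLinearMap.sub_apply, ContinuousLinearMap.one_apply, map_sub, hQ.idem]
    abel

lemma IsProj.inner_compl {Q : H →L[ℂ] H} (hQ : IsProj Q) (x y : H) :
    ⟪Q x, y - Q y⟫ = 0 := by
  rw [hQ.symm, map_sub, hQ.idem, sub_self, inner_zero_right]

lemma IsProj.pyth {Q : H →L[ℂ] H} (hQ : IsProj Q) (x : H) :
    ‖Q x‖ ^ 2 + ‖x - Q x‖ ^ 2 = ‖x‖ ^ 2 := by
  have h0 : ⟪Q x, x - Q x⟫ = 0 := hQ.inner_compl x x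
  have h := norm_add_sq_eq_norm_sq_add_norm_sq_of_inner_eq_zero _ _ h0
  rw [add_sub_cancel] at h
  linarith

lemma IsProj.norm_apply_le {Q : H →L[ℂ] H} (hQ : IsProj Q) (x : H) : ‖Q x‖ ≤ ‖x‖ := by
  nlinarith [hQ.pyth x, norm_nonneg (Q x), norm_nonneg x, sq_nonneg ‖x - Q x‖]

lemma IsProj.norm_compl_le {Q : H →L[ℂ] H} (hQ : IsProj Q) (x : H) : ‖x - Q x‖ ≤ ‖x‖ := by
  nlinarith [hQ.pyth x, norm_nonneg (x - Q x), norm_nonneg x, sq_nonneg ‖Q x‖]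

lemma IsProj.mem_range_iff {Q : H →L[ℂ] H} (hQ : IsProj Q) {x : H} :
    x ∈ LinearMap.range (Q : H →ₗ[ℂ] H) ↔ Q x = x := by
  constructor
  · rintro ⟨y, rfl⟩; exact hQ.idem y
  · intro h; exact ⟨x, h⟩

lemma IsProj.compl_mem_orthogonal {Q : H →L[ℂ] H} (hQ : IsProj Q) (x : H) :
    x - Q x ∈ (LinearMap.range (Q : H →ₗ[ℂ] H))ᗮ := by
  rw [Submodule.mem_orthogonal]
  rintro u ⟨y, rfl⟩
  exact hQ.inner_compl y x

lemma IsProj.apply_eq_zero_of_mem_orthogonal {Q : H →L[ℂ] H} (hQ : IsProj Q) {x : H}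
    (hx : x ∈ (LinearMap.range (Q : H →ₗ[ℂ] H))ᗮ) : Q x = 0 := by
  have h1 := hx (Q x) ⟨x, rfl⟩
  have h2 : ⟪Q x, Q x⟫ = 0 := by
    rw [hQ.symm, hQ.idem]
    exact inner_eq_zero_symm.mp h1
  exact inner_self_eq_zero.mp h2

lemma IsProj.range_isClosed {Q : H →L[ℂ] H} (hQ : IsProj Q) :
    IsClosed ((LinearMap.range (Q : H →ₗ[ℂ] H) : Submodule ℂ H) : Set H) := by
  have : ((LinearMap.range (Q : H →ₗ[ℂ] H) : Submodule ℂ H) : Set H) = {x | Q x = x} := by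
    ext x; exact hQ.mem_range_iff
  rw [this]
  exact isClosed_eq Q.continuous continuous_id

-- continuation lemmas
lemma norm_sub_le_max {P Q : H →L[ℂ] H} (hP : IsProj P) (hQ : IsProj Q) :
    ‖P - Q‖ ≤ max ‖(1 - P) ∘L Q‖ ‖P ∘L (1 - Q)‖ := by
  set c := ‖(1 - P) ∘L Q‖ with hc
  set d := ‖P ∘L (1 - Q)‖ with hd
  have hc0 : 0 ≤ c := norm_nonneg _
  have hd0 : 0 ≤ d := norm_nonneg _
  refine opNorm_le_bound _ (le_max_of_le_left hc0) fun x => ?_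
  set a := P (x - Q x) with ha
  set b := Q x - P (Q x) with hb
  have hx : (P - Q) x = a - b := by
    simp only [ha, hb, ContinuousLinearMap.sub_apply, map_sub]
    abel
  have horth : ⟪a, b⟫ = 0 := hP.inner_compl (x - Q x) (Q x)
  have hnorm : ‖a - b‖ ^ 2 = ‖a‖ ^ 2 + ‖b‖ ^ 2 := by
    have : ⟪a, -b⟫ = 0 := by rw [inner_neg_right, horth, neg_zero]
    have h := norm_add_sq_eq_norm_sq_add_norm_sq_of_inner_eq_zero _ _ this
    rw [← sub_eq_add_neg, norm_neg] at h
    nlinarith [h]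
  have hae : a = (P ∘L (1 - Q)) (x - Q x) := by
    simp [ContinuousLinearMap.comp_apply, ContinuousLinearMap.sub_apply,
      ContinuousLinearMap.one_apply, map_sub, hQ.idem, ha]
  have hbe : b = ((1 - P) ∘L Q) (Q x) := by
    simp [ContinuousLinearMap.comp_apply, ContinuousLinearMap.sub_apply,
      ContinuousLinearMap.one_apply, hQ.idem, hb]
  have hA : ‖a‖ ≤ d * ‖x - Q x‖ := by rw [hae]; exact le_opNorm _ _
  have hB : ‖b‖ ≤ c * ‖Q x‖ := by rw [hbe]; exact le_opNorm _ _
  have hpyth := hQ.pyth x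
  set M := max c d with hM
  have hcM : c ≤ M := le_max_left _ _
  have hdM : d ≤ M := le_max_right _ _
  have hM0 : 0 ≤ M := le_trans hc0 hcM
  have key : ‖(P - Q) x‖ ^ 2 ≤ (M * ‖x‖) ^ 2 := by
    rw [hx, hnorm]
    have h1 : ‖a‖ ^ 2 ≤ (d * ‖x - Q x‖) ^ 2 := by
      apply pow_le_pow_left₀ (norm_nonneg _) hA
    have h2 : ‖b‖ ^ 2 ≤ (c * ‖Q x‖) ^ 2 := by
      apply pow_le_pow_left₀ (norm_nonneg _) hB
    have h3 : (d * ‖x - Q x‖) ^ 2 ≤ (M * ‖x - Q x‖) ^ 2 := by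
      apply pow_le_pow_left₀ (by positivity) (mul_le_mul_of_nonneg_right hdM (norm_nonneg _))
    have h4 : (c * ‖Q x‖) ^ 2 ≤ (M * ‖Q x‖) ^ 2 := by
      apply pow_le_pow_left₀ (by positivity) (mul_le_mul_of_nonneg_right hcM (norm_nonneg _))
    nlinarith [sq_nonneg M]
  nlinarith [norm_nonneg ((P - Q) x), mul_nonneg hM0 (norm_nonneg x), key]

lemma exists_unit (T : H →L[ℂ] H) {Q : H →L[ℂ] H} (hQ : IsProj Q) {r : ℝ} (hr : 0 ≤ r)
    (h : r < ‖T ∘L Q‖) :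
    ∃ g : H, ‖g‖ = 1 ∧ g ∈ LinearMap.range (Q : H →ₗ[ℂ] H) ∧ r < ‖T g‖ := by
  have : ¬ (∀ x, ‖(T ∘L Q) x‖ ≤ r * ‖x‖) := by
    intro hb
    exact absurd (opNorm_le_bound _ hr hb) (not_le.mpr h)
  push_neg at this
  obtain ⟨x, hx⟩ := this
  rw [ContinuousLinearMap.comp_apply] at hx
  set u := Q x with hu
  have hune : u ≠ 0 := by
    intro h0
    rw [h0] at hx
    simp only [map_zero, norm_zero] at hx
    exact absurd (mul_nonneg hr (norm_nonneg x)) (not_le.mpr hx)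
  have hupos : (0:ℝ) < ‖u‖ := norm_pos_iff.mpr hune
  have hune' : ‖u‖ ≠ 0 := ne_of_gt hupos
  have hcnorm : ‖((‖u‖⁻¹ : ℝ) : ℂ)‖ = ‖u‖⁻¹ := by
    simp
  refine ⟨((‖u‖⁻¹ : ℝ) : ℂ) • u, ?_, ?_, ?_⟩
  · rw [norm_smul, hcnorm, inv_mul_cancel₀ hune']
  · exact Submodule.smul_mem _ _ ⟨x, rfl⟩
  · have hpos : (0:ℝ) < ‖u‖⁻¹ := inv_pos.mpr hupos
    have hle : r * ‖u‖ ≤ r * ‖x‖ := mul_le_mul_of_nonneg_left (hQ.norm_apply_le x) hr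
    have hlt : r * ‖u‖ < ‖T u‖ := lt_of_le_of_lt hle hx
    calc r = ‖u‖⁻¹ * (r * ‖u‖) := by
            rw [mul_comm r ‖u‖, ← mul_assoc, inv_mul_cancel₀ hune', one_mul]
    _ < ‖u‖⁻¹ * ‖T u‖ := mul_lt_mul_of_pos_left hlt hpos
    _ = ‖T (((‖u‖⁻¹ : ℝ) : ℂ) • u)‖ := by rw [map_smul, norm_smul, hcnorm]

lemma range_le_of_comp {Q Q' : H →L[ℂ] H} (h : Q' ∘L Q = Q) :
    LinearMap.range (Q : H →ₗ[ℂ] H) ≤ LinearMap.range (Q' : H →ₗ[ℂ] H) := by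
  rintro x ⟨y, rfl⟩
  exact ⟨Q y, by show Q' (Q y) = Q y; rw [← ContinuousLinearMap.comp_apply, h]⟩

lemma cut_lemma (𝒩 : Set (H →L[ℂ] H)) (hN : IsNest 𝒩) {P : H →L[ℂ] H} (hPp : IsProj P)
    {ε : ℝ} (hε1' : 0 ≤ 1 - ε)
    (hfar : ∀ Q ∈ 𝒩, 1 - ε < ‖P - Q‖) :
    ∃ Q₀ ∈ 𝒩, ∃ Q₁ ∈ 𝒩,
      (∀ Q ∈ 𝒩, LinearMap.range (Q : H →ₗ[ℂ] H) ≤ LinearMap.range (Q₀ : H →ₗ[ℂ] H) ∨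
        LinearMap.range (Q₁ : H →ₗ[ℂ] H) ≤ LinearMap.range (Q : H →ₗ[ℂ] H)) ∧
      1 - ε < ‖P ∘L (1 - Q₀)‖ ∧ 1 - ε < ‖(1 - P) ∘L Q₁‖ := by
  have hproj : ∀ Q ∈ 𝒩, IsProj Q := fun Q hQ =>
    isProj_of (hN.selfAdjoint Q hQ) (hN.idem Q hQ)
  by_cases hA : ∃ Q' ∈ 𝒩, 1 - ε < ‖(1 - P) ∘L Q'‖ ∧ 1 - ε < ‖P ∘L (1 - Q')‖
  · obtain ⟨Q', hQ'N, h1, h2⟩ := hA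
    refine ⟨Q', hQ'N, Q', hQ'N, ?_, h2, h1⟩
    intro Q hQ
    rcases hN.chain Q hQ Q' hQ'N with hc | hc
    · exact Or.inl (range_le_of_comp hc)
    · exact Or.inr (range_le_of_comp hc)
  · push_neg at hA
    set L : Set (H →L[ℂ] H) := {Q | Q ∈ 𝒩 ∧ ‖(1 - P) ∘L Q‖ ≤ 1 - ε} with hLdef
    set U : Set (H →L[ℂ] H) := {Q | Q ∈ 𝒩 ∧ 1 - ε < ‖(1 - P) ∘L Q‖} with hUdef
    have hLsub : L ⊆ 𝒩 := fun Q hQ => hQ.1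
    have hUsub : U ⊆ 𝒩 := fun Q hQ => hQ.1
    obtain ⟨Q₀, hQ₀N, hQ₀r⟩ := hN.sup_mem L hLsub
    obtain ⟨Q₁, hQ₁N, hQ₁r⟩ := hN.inf_mem U hUsub
    have h0L : (0 : H →L[ℂ] H) ∈ L := by
      refine ⟨hN.zero_mem, ?_⟩
      simp only [ContinuousLinearMap.comp_zero, norm_zero]
      exact hε1'
    have h1U : (1 : H →L[ℂ] H) ∈ U := by
      refine ⟨hN.one_mem, ?_⟩
      have h := hfar 1 hN.one_mem
      rw [norm_sub_rev] at h
      have he : (1 - P) ∘L (1 : H →L[ℂ] H) = 1 - P := by ext x; simp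
      rw [he]
      exact h
    haveI : Nonempty ↥L := ⟨⟨0, h0L⟩⟩
    haveI : Nonempty ↥U := ⟨⟨1, h1U⟩⟩
    -- c(Q₀) ≤ 1 - ε
    have hdirL : Directed (· ≤ ·) (fun q : ↥L => LinearMap.range (q.1 : H →ₗ[ℂ] H)) := by
      intro q q'
      rcases hN.chain q.1 (hLsub q.2) q'.1 (hLsub q'.2) with hc | hc
      · exact ⟨q', range_le_of_comp hc, le_refl _⟩
      · exact ⟨q, le_refl _, range_le_of_comp hc⟩
    have key0 : ∀ z ∈ LinearMap.range (Q₀ : H →ₗ[ℂ] H), ‖z - P z‖ ≤ (1 - ε) * ‖z‖ := by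
      intro z hz
      rw [hQ₀r] at hz
      have hz' : z ∈ closure ((⨆ Q ∈ L, LinearMap.range (Q : H →ₗ[ℂ] H) : Submodule ℂ H) : Set H) := by
        have hzz : z ∈ (((⨆ Q ∈ L, LinearMap.range (Q : H →ₗ[ℂ] H) : Submodule ℂ H)).topologicalClosure : Set H) := hz
        rwa [Submodule.topologicalClosure_coe] at hzz
      have hcl : IsClosed {z : H | ‖z - P z‖ ≤ (1 - ε) * ‖z‖} :=
        isClosed_le (Continuous.norm (continuous_id.sub P.continuous))
          (continuous_const.mul continuous_norm)
      refine closure_minimal ?_ hcl hz'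
      intro w hw
      rw [SetLike.mem_coe] at hw
      have hw' : w ∈ ⨆ q : ↥L, LinearMap.range (q.1 : H →ₗ[ℂ] H) := by
        rwa [iSup_subtype'] at hw
      obtain ⟨q, hq⟩ := (Submodule.mem_iSup_of_directed _ hdirL).mp hw'
      have hwq : (q.1 : H →L[ℂ] H) w = w := ((hproj _ (hLsub q.2)).mem_range_iff).mp hq
      have hb : ‖((1 - P) ∘L (q.1 : H →L[ℂ] H)) w‖ ≤ (1 - ε) * ‖w‖ :=
        le_trans (le_opNorm _ _) (mul_le_mul_of_nonneg_right q.2.2 (norm_nonneg w))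
      simpa [ContinuousLinearMap.comp_apply, hwq, ContinuousLinearMap.sub_apply] using hb
    have hc0 : ‖(1 - P) ∘L Q₀‖ ≤ 1 - ε := by
      refine opNorm_le_bound _ hε1' fun x => ?_
      have h1 : ‖Q₀ x - P (Q₀ x)‖ ≤ (1 - ε) * ‖Q₀ x‖ := key0 _ ⟨x, rfl⟩
      have h2 : (1 - ε) * ‖Q₀ x‖ ≤ (1 - ε) * ‖x‖ :=
        mul_le_mul_of_nonneg_left ((hproj Q₀ hQ₀N).norm_apply_le x) hε1'
      calc ‖((1 - P) ∘L Q₀) x‖ = ‖Q₀ x - P (Q₀ x)‖ := by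
            simp [ContinuousLinearMap.comp_apply, ContinuousLinearMap.sub_apply]
        _ ≤ (1 - ε) * ‖x‖ := le_trans h1 h2
    have hd0 : 1 - ε < ‖P ∘L (1 - Q₀)‖ := by
      rcases lt_max_iff.mp
          (lt_of_lt_of_le (hfar Q₀ hQ₀N) (norm_sub_le_max hPp (hproj Q₀ hQ₀N))) with h | h
      · exact absurd h (not_lt.mpr hc0)
      · exact h
    -- d(Q₁) ≤ 1 - ε
    have hdirU : Directed (· ≤ ·) (fun q : ↥U => (LinearMap.range (q.1 : H →ₗ[ℂ] H))ᗮ) := by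
      intro q q'
      rcases hN.chain q.1 (hUsub q.2) q'.1 (hUsub q'.2) with hc | hc
      · exact ⟨q, le_refl _, Submodule.orthogonal_le (range_le_of_comp hc)⟩
      · exact ⟨q', Submodule.orthogonal_le (range_le_of_comp hc), le_refl _⟩
    have hQ₁r' : LinearMap.range (Q₁ : H →ₗ[ℂ] H) = (⨆ q : ↥U, (LinearMap.range (q.1 : H →ₗ[ℂ] H))ᗮ)ᗮ := by
      rw [hQ₁r]
      calc (⨅ Q ∈ U, LinearMap.range (Q : H →ₗ[ℂ] H) : Submodule ℂ H)
          = ⨅ q : ↥U, LinearMap.range (q.1 : H →ₗ[ℂ] H) := by rw [iInf_subtype']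
        _ = ⨅ q : ↥U, ((LinearMap.range (q.1 : H →ₗ[ℂ] H))ᗮ)ᗮ := by
            refine iInf_congr fun q => ?_
            haveI : CompleteSpace (LinearMap.range (q.1 : H →ₗ[ℂ] H) : Submodule ℂ H) :=
              ((hproj _ (hUsub q.2)).range_isClosed).completeSpace_coe
            exact (Submodule.orthogonal_orthogonal _).symm
        _ = (⨆ q : ↥U, (LinearMap.range (q.1 : H →ₗ[ℂ] H))ᗮ)ᗮ :=
            Submodule.iInf_orthogonal _
    have key1 : ∀ z ∈ (LinearMap.range (Q₁ : H →ₗ[ℂ] H))ᗮ, ‖P z‖ ≤ (1 - ε) * ‖z‖ := by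
      intro z hz
      rw [hQ₁r', Submodule.orthogonal_orthogonal_eq_closure] at hz
      have hz' : z ∈ closure ((⨆ q : ↥U, (LinearMap.range (q.1 : H →ₗ[ℂ] H))ᗮ : Submodule ℂ H) : Set H) := by
        have hzz : z ∈ ((⨆ q : ↥U, (LinearMap.range (q.1 : H →ₗ[ℂ] H))ᗮ : Submodule ℂ H).topologicalClosure : Set H) := hz
        rwa [Submodule.topologicalClosure_coe] at hzz
      have hcl : IsClosed {z : H | ‖P z‖ ≤ (1 - ε) * ‖z‖} :=
        isClosed_le (Continuous.norm P.continuous) (continuous_const.mul continuous_norm)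
      refine closure_minimal ?_ hcl hz'
      intro w hw
      rw [SetLike.mem_coe] at hw
      obtain ⟨q, hq⟩ := (Submodule.mem_iSup_of_directed _ hdirU).mp hw
      have hqz : (q.1 : H →L[ℂ] H) w = 0 :=
        (hproj _ (hUsub q.2)).apply_eq_zero_of_mem_orthogonal hq
      have hd : ‖P ∘L (1 - (q.1 : H →L[ℂ] H))‖ ≤ 1 - ε := hA q.1 q.2.1 q.2.2
      have hb : ‖(P ∘L (1 - (q.1 : H →L[ℂ] H))) w‖ ≤ (1 - ε) * ‖w‖ :=
        le_trans (le_opNorm _ _) (mul_le_mul_of_nonneg_right hd (norm_nonneg w))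
      simpa [ContinuousLinearMap.comp_apply, ContinuousLinearMap.sub_apply, hqz] using hb
    have hd1 : ‖P ∘L (1 - Q₁)‖ ≤ 1 - ε := by
      refine opNorm_le_bound _ hε1' fun x => ?_
      have hmem : x - Q₁ x ∈ (LinearMap.range (Q₁ : H →ₗ[ℂ] H))ᗮ := (hproj Q₁ hQ₁N).compl_mem_orthogonal x
      have h1 : ‖P (x - Q₁ x)‖ ≤ (1 - ε) * ‖x - Q₁ x‖ := key1 _ hmem
      have h2 : (1 - ε) * ‖x - Q₁ x‖ ≤ (1 - ε) * ‖x‖ :=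
        mul_le_mul_of_nonneg_left ((hproj Q₁ hQ₁N).norm_compl_le x) hε1'
      calc ‖(P ∘L (1 - Q₁)) x‖ = ‖P (x - Q₁ x)‖ := by
            simp [ContinuousLinearMap.comp_apply, ContinuousLinearMap.sub_apply]
        _ ≤ (1 - ε) * ‖x‖ := le_trans h1 h2
    have hc1 : 1 - ε < ‖(1 - P) ∘L Q₁‖ := by
      rcases lt_max_iff.mp
          (lt_of_lt_of_le (hfar Q₁ hQ₁N) (norm_sub_le_max hPp (hproj Q₁ hQ₁N))) with h | h
      · exact h
      · exact absurd h (not_lt.mpr hd1)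
    refine ⟨Q₀, hQ₀N, Q₁, hQ₁N, ?_, hd0, hc1⟩
    intro Q hQ
    by_cases hcQ : ‖(1 - P) ∘L Q‖ ≤ 1 - ε
    · left
      rw [hQ₀r]
      refine le_trans ?_ (Submodule.le_topologicalClosure _)
      exact le_iSup₂ (f := fun (Q : H →L[ℂ] H) (_ : Q ∈ L) => LinearMap.range (Q : H →ₗ[ℂ] H)) Q ⟨hQ, hcQ⟩
    · right
      rw [hQ₁r]
      exact iInf₂_le Q ⟨hQ, lt_of_not_ge hcQ⟩

lemma zero_mem_nestAlg (𝒩 : Set (H →L[ℂ] H)) : (0 : H →L[ℂ] H) ∈ nestAlg 𝒩 := by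
  intro Q hQ
  ext x
  simp

lemma aux (𝒨 𝒩 : Set (H →L[ℂ] H)) (hM : IsNest 𝒨) (hN : IsNest 𝒩)
    {ε : ℝ} (hε0 : 0 < ε) (hε1 : ε ≤ 1 / 2) {P : H →L[ℂ] H} (hP : P ∈ 𝒨)
    (hfar : ∀ Q ∈ 𝒩, 1 - ε < ‖P - Q‖) :
    (1 - ε) ^ 3 ≤ kkDist (nestAlg 𝒨) (nestAlg 𝒩) := by
  have hPp : IsProj P := isProj_of (hM.selfAdjoint P hP) (hM.idem P hP)
  have hproj : ∀ Q ∈ 𝒩, IsProj Q := fun Q hQ =>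
    isProj_of (hN.selfAdjoint Q hQ) (hN.idem Q hQ)
  have hε1' : (0:ℝ) ≤ 1 - ε := by linarith
  obtain ⟨Q₀, hQ₀N, Q₁, hQ₁N, hgap, hd0, hc1⟩ := cut_lemma 𝒩 hN hPp hε1' hfar
  -- choose g ∈ range Q₁ with ‖(1-P) g‖ > 1 - ε
  obtain ⟨g, hg1, hgmem, hgval⟩ := exists_unit (1 - P) (hproj Q₁ hQ₁N) hε1' hc1
  -- choose h0 ∈ range (1 - Q₀) with ‖P h0‖ > 1 - ε
  obtain ⟨h0, hh1, hhmem, hhval⟩ := exists_unit P ((hproj Q₀ hQ₀N).one_sub) hε1' hd0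
  have hhorth : h0 ∈ (LinearMap.range (Q₀ : H →ₗ[ℂ] H))ᗮ := by
    obtain ⟨w, hw⟩ := hhmem
    have : h0 = w - Q₀ w := by
      rw [← hw]; simp
    rw [this]
    exact (hproj Q₀ hQ₀N).compl_mem_orthogonal w
  set B : H →L[ℂ] H := (innerSL ℂ h0).smulRight g with hBdef
  have hBapp : ∀ x, B x = (⟪h0, x⟫ : ℂ) • g := fun x => rfl
  have hBnorm : ‖B‖ ≤ 1 := by
    refine opNorm_le_bound _ zero_le_one fun x => ?_
    rw [hBapp, norm_smul]
    calc ‖(⟪h0, x⟫ : ℂ)‖ * ‖g‖ ≤ ‖h0‖ * ‖x‖ * ‖g‖ :=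
          mul_le_mul_of_nonneg_right (norm_inner_le_norm _ _) (norm_nonneg g)
      _ = 1 * ‖x‖ := by rw [hh1, hg1]; ring
  have hBmem : B ∈ nestAlg 𝒩 := by
    intro Q hQ
    ext x
    have happ : ((1 - Q) ∘L B ∘L Q) x = (⟪h0, Q x⟫ : ℂ) • (g - Q g) := by
      simp [ContinuousLinearMap.comp_apply, ContinuousLinearMap.sub_apply, hBapp, smul_sub]
    rcases hgap Q hQ with hle | hle
    · have hmem : Q x ∈ LinearMap.range (Q₀ : H →ₗ[ℂ] H) := hle ⟨x, rfl⟩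
      have : (⟪h0, Q x⟫ : ℂ) = 0 := inner_eq_zero_symm.mp (hhorth (Q x) hmem)
      rw [happ, this, zero_smul]
      rfl
    · have hQg : Q g = g := ((hproj Q hQ).mem_range_iff).mp (hle hgmem)
      rw [happ, hQg, sub_self, smul_zero]
      rfl
  have hfarB : ∀ A ∈ nestAlg 𝒨, (1 - ε) ^ 3 ≤ ‖B - A‖ := by
    intro A hAmem
    have hzero := hAmem P hP
    have hAh : A (P h0) - P (A (P h0)) = 0 := by
      have := ContinuousLinearMap.ext_iff.mp hzero h0
      simpa [ContinuousLinearMap.comp_apply, ContinuousLinearMap.sub_apply] using this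
    have hAh' : A (P h0) = P (A (P h0)) := by rwa [sub_eq_zero] at hAh
    have hinner : (⟪h0, P h0⟫ : ℂ) = ((‖P h0‖ ^ 2 : ℝ) : ℂ) := by
      have e1 : (⟪h0, P h0⟫ : ℂ) = ⟪h0, P (P h0)⟫ := by rw [hPp.idem]
      have e2 : (⟪h0, P (P h0)⟫ : ℂ) = ⟪P h0, P h0⟫ := (hPp.symm h0 (P h0)).symm
      rw [e1, e2, inner_self_eq_norm_sq_to_K]
      norm_cast
    have hBh : B (P h0) = ((‖P h0‖ ^ 2 : ℝ) : ℂ) • g := by rw [hBapp, hinner]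
    have hval : (B - A) (P h0) - P ((B - A) (P h0))
        = ((‖P h0‖ ^ 2 : ℝ) : ℂ) • (g - P g) := by
      simp only [ContinuousLinearMap.sub_apply, map_sub, hBh, map_smul, smul_sub]
      rw [← hAh']
      abel
    have step1 : (1 - ε) ^ 2 * ‖g - P g‖ ≤ ‖(B - A) (P h0)‖ := by
      have hnorm : ‖((‖P h0‖ ^ 2 : ℝ) : ℂ) • (g - P g)‖ = ‖P h0‖ ^ 2 * ‖g - P g‖ := by
        rw [norm_smul]
        congr 1
        simp [abs_of_nonneg (sq_nonneg ‖P h0‖)]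
      calc (1 - ε) ^ 2 * ‖g - P g‖ ≤ ‖P h0‖ ^ 2 * ‖g - P g‖ := by
            have h2 : (1 - ε) ^ 2 ≤ ‖P h0‖ ^ 2 :=
              pow_le_pow_left₀ hε1' (le_of_lt hhval) 2
            exact mul_le_mul_of_nonneg_right h2 (norm_nonneg _)
        _ = ‖(B - A) (P h0) - P ((B - A) (P h0))‖ := by rw [hval, hnorm]
        _ ≤ ‖(B - A) (P h0)‖ := hPp.norm_compl_le _
    have step2 : ‖(B - A) (P h0)‖ ≤ ‖B - A‖ := by
      calc ‖(B - A) (P h0)‖ ≤ ‖B - A‖ * ‖P h0‖ := le_opNorm _ _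
        _ ≤ ‖B - A‖ * 1 := by
            refine mul_le_mul_of_nonneg_left ?_ (norm_nonneg _)
            calc ‖P h0‖ ≤ ‖h0‖ := hPp.norm_apply_le h0
              _ = 1 := hh1
        _ = ‖B - A‖ := mul_one _
    have hgval' : 1 - ε ≤ ‖g - P g‖ := by
      have he : (1 - P) g = g - P g := by simp
      rw [he] at hgval
      linarith
    have e3 : (1 - ε) ^ 2 * (1 - ε) ≤ (1 - ε) ^ 2 * ‖g - P g‖ :=
      mul_le_mul_of_nonneg_left hgval' (sq_nonneg _)
    nlinarith [step1, step2]
  haveI : Nonempty ↥(nestAlg 𝒨) := ⟨⟨0, zero_mem_nestAlg 𝒨⟩⟩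
  have hinf : (1 - ε) ^ 3 ≤ Metric.infDist B (nestAlg 𝒨) := by
    rw [Metric.infDist_eq_iInf]
    exact le_ciInf fun A => by rw [dist_eq_norm]; exact hfarB A.1 A.2
  have hbdd : BddAbove (Set.range fun T : {T : H →L[ℂ] H // T ∈ nestAlg 𝒩 ∧ ‖T‖ ≤ 1} =>
      Metric.infDist T.1 (nestAlg 𝒨)) := by
    refine ⟨1, ?_⟩
    rintro r ⟨T, rfl⟩
    calc Metric.infDist T.1 (nestAlg 𝒨) ≤ dist T.1 0 :=
          Metric.infDist_le_dist_of_mem (zero_mem_nestAlg 𝒨)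
      _ = ‖T.1‖ := by rw [dist_eq_norm, sub_zero]
      _ ≤ 1 := T.2.2
  refine le_trans ?_ (le_max_right _ _)
  exact le_trans hinf (le_ciSup hbdd ⟨B, hBmem, hBnorm⟩)

lemma kk_comm (𝒜 ℬ : Set (H →L[ℂ] H)) : kkDist 𝒜 ℬ = kkDist ℬ 𝒜 := max_comm _ _


end Stmt16Helpers

/-- If the Kadison–Kastler distance between two nest algebras on a separable Hilbert
space is `< 1`, then the Hausdorff distance between the nests is `< 1`. -/
theorem stmt16 {H : Type*} [NormedAddCommGroup H] [InnerProductSpace ℂ H]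
    [CompleteSpace H] [TopologicalSpace.SeparableSpace H]
    (𝒨 𝒩 : Set (H →L[ℂ] H)) (hM : IsNest 𝒨) (hN : IsNest 𝒩)
    (h : kkDist (nestAlg 𝒨) (nestAlg 𝒩) < 1) :
    Metric.hausdorffDist 𝒨 𝒩 < 1 := by
  set k := kkDist (nestAlg 𝒨) (nestAlg 𝒩) with hk
  have hk0 : 0 ≤ k := by
    refine le_trans ?_ (le_max_left _ _)
    haveI : Nonempty {T : H →L[ℂ] H // T ∈ nestAlg 𝒨 ∧ ‖T‖ ≤ 1} :=
      ⟨⟨0, zero_mem_nestAlg 𝒨, by simp⟩⟩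
    have hbdd : BddAbove (Set.range fun T : {T : H →L[ℂ] H // T ∈ nestAlg 𝒨 ∧ ‖T‖ ≤ 1} =>
        Metric.infDist T.1 (nestAlg 𝒩)) := by
      refine ⟨1, ?_⟩
      rintro r ⟨T, rfl⟩
      calc Metric.infDist T.1 (nestAlg 𝒩) ≤ dist T.1 0 :=
            Metric.infDist_le_dist_of_mem (zero_mem_nestAlg 𝒩)
        _ = ‖T.1‖ := by rw [dist_eq_norm, sub_zero]
        _ ≤ 1 := T.2.2
    exact le_trans Metric.infDist_nonneg
      (le_ciSup hbdd ⟨0, zero_mem_nestAlg 𝒨, by simp⟩)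
  set ε : ℝ := min (1 / 2) ((1 - k) / 4) with hε
  have hε0 : 0 < ε := lt_min (by norm_num) (by linarith)
  have hε2 : ε ≤ 1 / 2 := min_le_left _ _
  have hε4 : ε ≤ (1 - k) / 4 := min_le_right _ _
  have hcube : k < (1 - ε) ^ 3 := by nlinarith [sq_nonneg ε, hε0, hε2, hε4]
  have H1 : ∀ x ∈ 𝒨, Metric.infDist x 𝒩 ≤ 1 - ε := by
    intro x hx
    by_contra hlt
    push_neg at hlt
    have hfar : ∀ Q ∈ 𝒩, 1 - ε < ‖x - Q‖ := fun Q hQ =>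
      lt_of_lt_of_le hlt (by rw [← dist_eq_norm]; exact Metric.infDist_le_dist_of_mem hQ)
    have := aux 𝒨 𝒩 hM hN hε0 hε2 hx hfar
    linarith
  have H2 : ∀ x ∈ 𝒩, Metric.infDist x 𝒨 ≤ 1 - ε := by
    intro x hx
    by_contra hlt
    push_neg at hlt
    have hfar : ∀ Q ∈ 𝒨, 1 - ε < ‖x - Q‖ := fun Q hQ =>
      lt_of_lt_of_le hlt (by rw [← dist_eq_norm]; exact Metric.infDist_le_dist_of_mem hQ)
    have := aux 𝒩 𝒨 hN hM hε0 hε2 hx hfar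
    rw [kk_comm] at this
    linarith
  have := Metric.hausdorffDist_le_of_infDist (by linarith : (0:ℝ) ≤ 1 - ε) H1 H2
  linarith
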